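/- Let d be the discriminant of an order O_d in an imaginary quadratic field K in which the prime p splits, and assume O_d^× = {±1}. Let 𝔭 be a prime of O_d above p, let k be the order of the class of 𝔭 in the Picard group of O_d, and write 𝔭^k = uO_d. Then the unit group of the ℤ[1/p]-order O = O_d[1/p] is generated by O_d^×, u and p; i.e. O^× = ⟨±1, u, p⟩. -/

import Mathlib

/-!
If `x` and `x⁻¹` both lie in `R[1/p]`, then `r = pᵐx ∈ R` divides a power of `p`, so
`rR = 𝔭ⁱ𝔭'ʲ`. Cancelling `(pR)^min(i,j) = (𝔭𝔭')^min(i,j)` leaves a generator `v` of `𝔭ᵗ` or of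
`𝔭'ᵗ`. In the first case `k ∣ t` by minimality of `k`, so `vR = u^(t/k)R` and `v = ±u^(t/k)` because
`R^× = {±1}`; in the second case `𝔭ᵗ` is generated by `pᵗ/v`, which reduces to the first.
Conversely `u⁻¹ = w/pᵏ` where `uw = pᵏ`, so `u`, `p` and their inverses lie in `R[1/p]`.
-/

namespace Ideal

variable {A : Type*} [CommRing A]

theorem pow_mul_pow_eq_span_pow_mul {𝔭 𝔭' : Ideal A} {p : A} (hsplit : 𝔭 * 𝔭' = span {p})
    {i j : ℕ} (hji : j ≤ i) : 𝔭 ^ i * 𝔭' ^ j = span {p ^ j} * 𝔭 ^ (i - j) := by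
  rw [← span_singleton_pow, ← hsplit, mul_pow, ← Nat.sub_add_cancel hji, pow_add,
    Nat.add_sub_cancel]
  ring

theorem dvd_pow_of_mul_eq_span {𝔭 𝔭' : Ideal A} {p u : A} (hsplit : 𝔭 * 𝔭' = span {p}) {k : ℕ}
    (hu : 𝔭 ^ k = span {u}) : u ∣ p ^ k := by
  rw [← mem_span_singleton, ← hu]
  refine mul_le_left (J := 𝔭' ^ k) ?_
  rw [← mul_pow, hsplit, span_singleton_pow]
  exact mem_span_singleton_self _

theorem exists_eq_mul_of_span_singleton_mul_eq [IsDomain A] {c d : A} {I : Ideal A} (hc : c ≠ 0)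
    (h : span {c} * I = span {d}) : ∃ w, d = c * w ∧ I = span {w} := by
  obtain ⟨w, -, rfl⟩ := mem_span_singleton_mul.mp (h ▸ mem_span_singleton_self d)
  refine ⟨w, rfl, (span_singleton_mul_right_inj hc).mp ?_⟩
  rw [h, span_singleton_mul_span_singleton]

theorem exists_associated_pow_of_pow_eq_span [IsDomain A] {𝔭 : Ideal A} {k : ℕ} {u : A}
    (hu : 𝔭 ^ k = span {u}) (hmin : ∀ m : ℕ, 0 < m → (∃ v : A, 𝔭 ^ m = span {v}) → k ∣ m)
    {m : ℕ} {v : A} (hv : 𝔭 ^ m = span {v}) : ∃ c : ℕ, Associated v (u ^ c) := by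
  obtain ⟨c, rfl⟩ : k ∣ m := m.eq_zero_or_pos.elim (fun h ↦ h ▸ dvd_zero k) (hmin m · ⟨v, hv⟩)
  exact ⟨c, span_singleton_eq_span_singleton.mp (by rw [← hv, pow_mul, hu, span_singleton_pow])⟩

end Ideal

section SignedMonomials

variable {K : Type*} [Field K]

def signedMonomials (u p : K) : Set K :=
  {x | ∃ (ε : ℤˣ) (a b : ℤ), x = (ε : ℤ) * u ^ a * p ^ b}

variable {u p x y : K}

theorem pow_mem_signedMonomials (n : ℕ) : p ^ n ∈ signedMonomials u p :=
  ⟨1, 0, n, by simp⟩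

theorem inv_mem_signedMonomials (hx : x ∈ signedMonomials u p) : x⁻¹ ∈ signedMonomials u p := by
  obtain ⟨ε, a, b, rfl⟩ := hx
  refine ⟨ε, -a, -b, ?_⟩
  rcases Int.units_eq_one_or ε with rfl | rfl <;> simp [zpow_neg, mul_comm]

theorem mul_mem_signedMonomials (hu : u ≠ 0) (hp : p ≠ 0) (hx : x ∈ signedMonomials u p)
    (hy : y ∈ signedMonomials u p) : x * y ∈ signedMonomials u p := by
  obtain ⟨ε, a, b, rfl⟩ := hx
  obtain ⟨ε', a', b', rfl⟩ := hy
  exact ⟨ε * ε', a + a', b + b', by rw [zpow_add₀ hu, zpow_add₀ hp]; push_cast; ring⟩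

theorem mem_signedMonomials_of_eq_or_eq_neg {c : ℕ} (h : x = u ^ c ∨ x = -u ^ c) :
    x ∈ signedMonomials u p := by
  rcases h with rfl | rfl
  exacts [⟨1, c, 0, by simp⟩, ⟨-1, c, 0, by simp⟩]

end SignedMonomials

namespace Subring

variable {K : Type*} [Field K] {R : Subring K}

theorem coe_eq_or_eq_neg_of_associated (hR : ∀ x : K, x ∈ R → x⁻¹ ∈ R → x = 1 ∨ x = -1)
    {v w : R} (h : Associated v w) : (v : K) = w ∨ (v : K) = -w := by
  obtain ⟨c, rfl⟩ := h.symm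
  have hc : ((c : R) : K)⁻¹ = ((c⁻¹ : Rˣ) : R) :=
    inv_eq_of_mul_eq_one_right (by rw [← Subring.coe_mul, Units.mul_inv, Subring.coe_one])
  rcases hR _ (c : R).2 (hc ▸ (c⁻¹ : Rˣ).val.2) with h | h <;> simp [h]

def away (R : Subring K) (p : R) : Subring K where
  carrier := {x | ∃ m : ℕ, (p : K) ^ m * x ∈ R}
  mul_mem' := fun ⟨m, hm⟩ ⟨n, hn⟩ ↦ ⟨m + n, by convert R.mul_mem hm hn using 1; ring⟩
  one_mem' := ⟨0, by simp⟩
  add_mem' := fun {x y} ⟨m, hm⟩ ⟨n, hn⟩ ↦ ⟨m + n, by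
    convert R.add_mem (R.mul_mem (R.pow_mem p.2 n) hm) (R.mul_mem (R.pow_mem p.2 m) hn) using 1
    ring⟩
  zero_mem' := ⟨0, by simp⟩
  neg_mem' := fun ⟨m, hm⟩ ↦ ⟨m, by simpa using R.neg_mem hm⟩

theorem zpow_mem_of_inv_mem (S : Subring K) {y : K} (hy : y ∈ S) (hy' : y⁻¹ ∈ S) (a : ℤ) :
    y ^ a ∈ S := by
  obtain ⟨n, rfl | rfl⟩ := a.eq_nat_or_neg
  · simpa using S.pow_mem hy n
  · simpa using S.pow_mem hy' n

theorem signedMonomials_subset (S : Subring K) {u p : K} (hu : u ∈ S) (hu' : u⁻¹ ∈ S)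
    (hp : p ∈ S) (hp' : p⁻¹ ∈ S) : signedMonomials u p ⊆ S := by
  rintro _ ⟨ε, a, b, rfl⟩
  exact S.mul_mem (S.mul_mem (intCast_mem S _) (S.zpow_mem_of_inv_mem hu hu' a))
    (S.zpow_mem_of_inv_mem hp hp' b)

theorem inv_mem_away_of_dvd_pow {p u : R} {k : ℕ} (hu : (u : K) ≠ 0) (h : u ∣ p ^ k) :
    (u : K)⁻¹ ∈ R.away p := by
  obtain ⟨w, hw⟩ := h
  refine ⟨k, ?_⟩
  convert w.2 using 1
  rw [← SubmonoidClass.coe_pow, hw, Subring.coe_mul]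
  field_simp

variable {p u : R} {𝔭 𝔭' : Ideal R} {k : ℕ}

theorem coe_mem_signedMonomials_of_pow_eq_span (hR : ∀ x : K, x ∈ R → x⁻¹ ∈ R → x = 1 ∨ x = -1)
    (hu : 𝔭 ^ k = Ideal.span {u})
    (hmin : ∀ m : ℕ, 0 < m → (∃ v : R, 𝔭 ^ m = Ideal.span {v}) → k ∣ m)
    {m : ℕ} {v : R} (hv : 𝔭 ^ m = Ideal.span {v}) : (v : K) ∈ signedMonomials (u : K) p := by
  obtain ⟨c, hc⟩ := Ideal.exists_associated_pow_of_pow_eq_span hu hmin hv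
  exact mem_signedMonomials_of_eq_or_eq_neg (by simpa using coe_eq_or_eq_neg_of_associated hR hc)

theorem coe_mem_signedMonomials_of_pow_eq_span' (hR : ∀ x : K, x ∈ R → x⁻¹ ∈ R → x = 1 ∨ x = -1)
    (hsplit : 𝔭 * 𝔭' = Ideal.span {p}) (hu : 𝔭 ^ k = Ideal.span {u})
    (hmin : ∀ m : ℕ, 0 < m → (∃ v : R, 𝔭 ^ m = Ideal.span {v}) → k ∣ m)
    (hu0 : (u : K) ≠ 0) (hp0 : (p : K) ≠ 0) {t : ℕ} {v : R} (hv0 : v ≠ 0)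
    (hv : 𝔭' ^ t = Ideal.span {v}) : (v : K) ∈ signedMonomials (u : K) p := by
  obtain ⟨w, hpw, hw⟩ := Ideal.exists_eq_mul_of_span_singleton_mul_eq hv0 (I := 𝔭 ^ t)
    (d := p ^ t) (by rw [← hv, mul_comm, ← mul_pow, hsplit, Ideal.span_singleton_pow])
  have hpw' : (p : K) ^ t = v * w := by exact_mod_cast congrArg ((↑) : R → K) hpw
  have hw0 : (w : K) ≠ 0 := right_ne_zero_of_mul (hpw' ▸ pow_ne_zero t hp0)
  rw [(eq_mul_inv_iff_mul_eq₀ hw0).mpr hpw'.symm]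
  exact mul_mem_signedMonomials hu0 hp0 (pow_mem_signedMonomials t)
    (inv_mem_signedMonomials (coe_mem_signedMonomials_of_pow_eq_span hR hu hmin hw))

theorem coe_mem_signedMonomials_of_span_eq (hR : ∀ x : K, x ∈ R → x⁻¹ ∈ R → x = 1 ∨ x = -1)
    (hsplit : 𝔭 * 𝔭' = Ideal.span {p}) (hu : 𝔭 ^ k = Ideal.span {u})
    (hmin : ∀ m : ℕ, 0 < m → (∃ v : R, 𝔭 ^ m = Ideal.span {v}) → k ∣ m)
    (hu0 : (u : K) ≠ 0) (hp0 : (p : K) ≠ 0) {r : R} (hr0 : r ≠ 0) {i j : ℕ}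
    (hr : Ideal.span {r} = 𝔭 ^ i * 𝔭' ^ j) : (r : K) ∈ signedMonomials (u : K) p := by
  have hp : p ≠ 0 := by rintro rfl; simp at hp0
  rcases le_total j i with hji | hij
  · obtain ⟨v, rfl, hv⟩ := Ideal.exists_eq_mul_of_span_singleton_mul_eq (pow_ne_zero j hp)
      ((Ideal.pow_mul_pow_eq_span_pow_mul hsplit hji).symm.trans hr.symm)
    push_cast
    exact mul_mem_signedMonomials hu0 hp0 (pow_mem_signedMonomials j)
      (coe_mem_signedMonomials_of_pow_eq_span hR hu hmin hv)
  · obtain ⟨v, rfl, hv⟩ := Ideal.exists_eq_mul_of_span_singleton_mul_eq (pow_ne_zero i hp)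
      ((Ideal.pow_mul_pow_eq_span_pow_mul (mul_comm 𝔭 𝔭' ▸ hsplit) hij).symm.trans
        (hr.trans (mul_comm _ _)).symm)
    push_cast
    exact mul_mem_signedMonomials hu0 hp0 (pow_mem_signedMonomials i)
      (coe_mem_signedMonomials_of_pow_eq_span' hR hsplit hu hmin hu0 hp0
        (right_ne_zero_of_mul hr0) hv)

theorem mem_away_and_inv_mem_away_iff (hR : ∀ x : K, x ∈ R → x⁻¹ ∈ R → x = 1 ∨ x = -1)
    (hsplit : 𝔭 * 𝔭' = Ideal.span {p})
    (hfact : ∀ (x : R) (m : ℕ), Ideal.span {p} ^ m ≤ Ideal.span {x} →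
        ∃ i j : ℕ, Ideal.span {x} = 𝔭 ^ i * 𝔭' ^ j)
    (hu : 𝔭 ^ k = Ideal.span {u})
    (hmin : ∀ m : ℕ, 0 < m → (∃ v : R, 𝔭 ^ m = Ideal.span {v}) → k ∣ m)
    (hu0 : (u : K) ≠ 0) (hp0 : (p : K) ≠ 0) {x : K} (hx : x ≠ 0) :
    x ∈ R.away p ∧ x⁻¹ ∈ R.away p ↔ x ∈ signedMonomials (u : K) p := by
  constructor
  · rintro ⟨⟨m, hm⟩, ⟨n, hn⟩⟩
    set r : R := ⟨_, hm⟩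
    have hrs : r * ⟨_, hn⟩ = p ^ (m + n) := by
      ext
      simp only [r, Subring.coe_mul, SubmonoidClass.coe_pow]
      field_simp
      ring
    obtain ⟨i, j, hij⟩ := hfact r (m + n) (by
      rw [Ideal.span_singleton_pow, Ideal.span_singleton_le_span_singleton, ← hrs]
      exact dvd_mul_right r _)
    have hr0 : r ≠ 0 := by simp [r, ← Subring.coe_eq_zero_iff, hx, hp0]
    have hxr : x = r * ((p : K) ^ m)⁻¹ := by simp only [r]; field_simp
    rw [hxr]
    exact mul_mem_signedMonomials hu0 hp0
      (coe_mem_signedMonomials_of_span_eq hR hsplit hu hmin hu0 hp0 hr0 hij)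
      (inv_mem_signedMonomials (pow_mem_signedMonomials m))
  · intro hxS
    have hS := (R.away p).signedMonomials_subset (u := u) (p := p) ⟨0, by simp⟩
      (inv_mem_away_of_dvd_pow hu0 (Ideal.dvd_pow_of_mul_eq_span hsplit hu))
      ⟨0, by simp⟩ ⟨1, by simp [hp0]⟩
    exact ⟨hS hxS, hS (inv_mem_signedMonomials hxS)⟩

end Subring

theorem stmt7_general {K : Type*} [Field K] [Algebra ℚ K]
    (R : Subring K)
    (hRunits : ∀ x : K, x ∈ R → x⁻¹ ∈ R → x = 1 ∨ x = -1)
    (p : ℕ) (hp : p.Prime)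
    (𝔭 𝔭' : Ideal R)
    (hsplit : 𝔭 * 𝔭' = Ideal.span {(p : R)})
    (hfact : ∀ (x : R) (m : ℕ), (Ideal.span {(p : R)}) ^ m ≤ Ideal.span {x} →
        ∃ i j : ℕ, Ideal.span {x} = 𝔭 ^ i * 𝔭' ^ j)
    (k : ℕ) (u : R) (hu0 : (u : K) ≠ 0)
    (hu : 𝔭 ^ k = Ideal.span {u})
    (hmin : ∀ m : ℕ, 0 < m → (∃ v : R, 𝔭 ^ m = Ideal.span {v}) → k ∣ m) :
    ∀ x : K, x ≠ 0 →
      (((∃ m : ℕ, (p : K) ^ m * x ∈ R) ∧ (∃ m : ℕ, (p : K) ^ m * x⁻¹ ∈ R)) ↔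
        (∃ (ε : ℤˣ) (a b : ℤ), x = (ε : ℤ) * (u : K) ^ a * (p : K) ^ b)) := by
  have : CharZero K := charZero_of_injective_algebraMap (algebraMap ℚ K).injective
  have hpK : ((p : R) : K) = p := by simp
  have hp0 : ((p : R) : K) ≠ 0 := by simpa using hp.ne_zero
  intro x hx
  have key := R.mem_away_and_inv_mem_away_iff hRunits hsplit hfact hu hmin hu0 hp0 hx
  rwa [hpK] at key

/-- Let `K` be an imaginary quadratic field, `R = O_d ⊆ K` an order whose unit
group is `{±1}`, and `p` a prime that splits in `R` as `pR = 𝔭𝔭'`. Let `k` be the order of the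
class of `𝔭` in the Picard group of `R` and write `𝔭^k = uR`. Then the unit group of the
`ℤ[1/p]`-order `O = R[1/p]` is generated by `R^× = {±1}`, `u` and `p`. Membership in `O` is
expressed inside `K` as: `x ∈ O ↔ ∃ m, pᵐ·x ∈ R`. -/
theorem stmt7 {K : Type*} [Field K] [Algebra ℚ K]
    (hquad : Module.finrank ℚ K = 2)
    (himag : IsEmpty (K →+* ℝ))
    (R : Subring K)
    (hRunits : ∀ x : K, x ∈ R → x⁻¹ ∈ R → x = 1 ∨ x = -1)
    (p : ℕ) (hp : p.Prime)
    (𝔭 𝔭' : Ideal R) (h𝔭 : 𝔭.IsPrime) (h𝔭' : 𝔭'.IsPrime) (hne : 𝔭 ≠ 𝔭')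
    (hsplit : 𝔭 * 𝔭' = Ideal.span {(p : R)})
    (hfact : ∀ (x : R) (m : ℕ), (Ideal.span {(p : R)}) ^ m ≤ Ideal.span {x} →
        ∃ i j : ℕ, Ideal.span {x} = 𝔭 ^ i * 𝔭' ^ j)
    (k : ℕ) (hk : 0 < k) (u : R) (hu0 : (u : K) ≠ 0)
    (hu : 𝔭 ^ k = Ideal.span {u})
    (hmin : ∀ m : ℕ, 0 < m → (∃ v : R, 𝔭 ^ m = Ideal.span {v}) → k ∣ m) :
    ∀ x : K, x ≠ 0 →
      (((∃ m : ℕ, (p : K) ^ m * x ∈ R) ∧ (∃ m : ℕ, (p : K) ^ m * x⁻¹ ∈ R)) ↔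
        (∃ (ε : ℤˣ) (a b : ℤ), x = (ε : ℤ) * (u : K) ^ a * (p : K) ^ b)) :=
  stmt7_general R hRunits p hp 𝔭 𝔭' hsplit hfact k u hu0 hu hmin
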